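/- arXiv:math/0305145 — 3 statements merged into one kernel-verified Lean document; each statement's English description precedes it below -/
import Mathlib

section
/- For two n-diagrams D₁ (over a t₁-family of cubes) and D₂ (over a t₂-family of cubes), the intersection of their automorphism groups equals the automorphism group of the intersection diagram: Aut(D₁) ∩ Aut(D₂) = Aut(D₁ ∩ D₂), as subgroups of S_n. -/
/-- An `n`-diagram over a `t`-family of cubes (with cube index type `ι`):
the `I`-cube with index set `I j ⊆ {1,…,t}` has as vertices the `ZMod 2`-vectors
supported on `I j`, and the diagram assigns to each `k ∈ {1,…,n}` a cube and
a vertex of that cube. -/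
structure CubeDiagram (n t : ℕ) (ι : Type) where
  I : ι → Finset (Fin t)
  cube : Fin n → ι
  vtx : Fin n → Fin t → ZMod 2
  vtx_supp : ∀ k i, i ∉ I (cube k) → vtx k i = 0

namespace CubeDiagram

/-- The fiber of a diagram over the vertex `v` of the cube indexed by `j`. -/
def fiber {n t : ℕ} {ι : Type} (D : CubeDiagram n t ι) (j : ι) (v : Fin t → ZMod 2) :
    Set (Fin n) :=
  {k | D.cube k = j ∧ D.vtx k = v}

/-- The intersection of two diagrams: cubes are indexed by pairs, index sets are
disjoint unions, and vertices are concatenations. -/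
def inter {n t₁ t₂ : ℕ} {ι₁ ι₂ : Type} (D₁ : CubeDiagram n t₁ ι₁) (D₂ : CubeDiagram n t₂ ι₂) :
    CubeDiagram n (t₁ + t₂) (ι₁ × ι₂) where
  I := fun j => (D₁.I j.1).map (Fin.castAddEmb t₂) ∪
      (D₂.I j.2).map (Fin.natAddEmb t₁)
  cube := fun k => (D₁.cube k, D₂.cube k)
  vtx := fun k => Fin.append (D₁.vtx k) (D₂.vtx k)
  vtx_supp := by
    intro k i
    refine Fin.addCases (motive := fun i =>
      i ∉ _ → Fin.append (D₁.vtx k) (D₂.vtx k) i = 0) ?_ ?_ i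
    · intro i0 hi
      rw [Fin.append_left]
      apply D₁.vtx_supp
      intro hmem
      exact hi (Finset.mem_union_left _ (Finset.mem_map_of_mem _ hmem))
    · intro i0 hi
      rw [Fin.append_right]
      apply D₂.vtx_supp
      intro hmem
      exact hi (Finset.mem_union_right _ (Finset.mem_map_of_mem _ hmem))

/-- `σ ∈ ℤ₂ᵗ` is a cube symmetry associated to `π`: `π` preserves the fibers over
the cubes and moves vertices by (the restrictions of) the translation `σ`. -/
def IsAssoc {n t : ℕ} {ι : Type} (D : CubeDiagram n t ι) (σ : Fin t → ZMod 2)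
    (π : Equiv.Perm (Fin n)) : Prop :=
  (∀ k, D.cube (π k) = D.cube k) ∧
  ∀ k, ∀ i ∈ D.I (D.cube k), D.vtx (π k) i = σ i + D.vtx k i

/-- `π` is an automorphism of the diagram `D`. -/
def IsAut {n t : ℕ} {ι : Type} (D : CubeDiagram n t ι) (π : Equiv.Perm (Fin n)) : Prop :=
  ∃ σ, D.IsAssoc σ π

end CubeDiagram

/-- Taking intersections of diagrams commutes with passing to the automorphism group:
`Aut(D₁) ∩ Aut(D₂) = Aut(D₁ ∩ D₂)` as subgroups (sets of permutations) of `Sₙ`. -/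
theorem stmt9 {n t₁ t₂ : ℕ} {ι₁ ι₂ : Type} (D₁ : CubeDiagram n t₁ ι₁)
    (D₂ : CubeDiagram n t₂ ι₂) :
    {π : Equiv.Perm (Fin n) | D₁.IsAut π} ∩ {π : Equiv.Perm (Fin n) | D₂.IsAut π} =
      {π : Equiv.Perm (Fin n) | (D₁.inter D₂).IsAut π} := by
  ext π
  simp only [Set.mem_inter_iff, Set.mem_setOf_eq]
  constructor
  · rintro ⟨⟨σ₁, hc₁, hv₁⟩, ⟨σ₂, hc₂, hv₂⟩⟩
    refine ⟨Fin.append σ₁ σ₂, ?_, ?_⟩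
    · intro k
      simp [CubeDiagram.inter, hc₁ k, hc₂ k]
    · intro k i hi
      simp only [CubeDiagram.inter, Finset.mem_union, Finset.mem_map] at hi
      rcases hi with ⟨i0, hi0, rfl⟩ | ⟨i0, hi0, rfl⟩
      · simp only [CubeDiagram.inter]
        exact calc Fin.append (D₁.vtx (π k)) (D₂.vtx (π k)) (Fin.castAdd t₂ i0)
              = D₁.vtx (π k) i0 := Fin.append_left _ _ _
          _ = σ₁ i0 + D₁.vtx k i0 := hv₁ k i0 hi0
          _ = Fin.append σ₁ σ₂ (Fin.castAdd t₂ i0) +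
              Fin.append (D₁.vtx k) (D₂.vtx k) (Fin.castAdd t₂ i0) := by
                rw [Fin.append_left, Fin.append_left]
      · simp only [CubeDiagram.inter]
        exact calc Fin.append (D₁.vtx (π k)) (D₂.vtx (π k)) (Fin.natAdd t₁ i0)
              = D₂.vtx (π k) i0 := Fin.append_right _ _ _
          _ = σ₂ i0 + D₂.vtx k i0 := hv₂ k i0 hi0
          _ = Fin.append σ₁ σ₂ (Fin.natAdd t₁ i0) +
              Fin.append (D₁.vtx k) (D₂.vtx k) (Fin.natAdd t₁ i0) := by
                rw [Fin.append_right, Fin.append_right]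
  · rintro ⟨σ, hc, hv⟩
    constructor
    · refine ⟨fun i => σ (Fin.castAdd t₂ i), fun k => ?_, fun k i hi => ?_⟩
      · exact congrArg Prod.fst (hc k)
      · have := hv k (Fin.castAdd t₂ i) (by
          simp only [CubeDiagram.inter, Finset.mem_union, Finset.mem_map]
          exact Or.inl ⟨i, hi, rfl⟩)
        simpa [CubeDiagram.inter, Fin.append_left] using this
    · refine ⟨fun i => σ (Fin.natAdd t₁ i), fun k => ?_, fun k i hi => ?_⟩
      · exact congrArg Prod.snd (hc k)
      · have := hv k (Fin.natAdd t₁ i) (by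
          simp only [CubeDiagram.inter, Finset.mem_union, Finset.mem_map]
          exact Or.inr ⟨i, hi, rfl⟩)
        simpa [CubeDiagram.inter, Fin.append_right] using this
end

section
/- Let D be an n-diagram over a t-family of cubes such that all fibers over vertices have cardinality at most 1 (equivalently, the induced partition ρ(D) has only singleton blocks on the support of D and D is injective onto occupied vertices). Then the map sending π ∈ Aut(D) to its associated cube symmetry σ ∈ ℤ₂^t is a well-defined injective group homomorphism; in particular Aut(D) is isomorphic to a subgroup of ℤ₂^t, hence an elementary abelian 2-group. -/
namespace CubeDiagram

/-- The automorphism group of a diagram, as a subgroup of `Sₙ`. -/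
def aut {n t : ℕ} {ι : Type} (D : CubeDiagram n t ι) : Subgroup (Equiv.Perm (Fin n)) where
  carrier := {π | D.IsAut π}
  one_mem' := ⟨0, fun _ => rfl, fun k i _ => by simp⟩
  mul_mem' := by
    rintro a b ⟨σa, ha1, ha2⟩ ⟨σb, hb1, hb2⟩
    refine ⟨σa + σb, fun k => ?_, fun k i hi => ?_⟩
    · rw [Equiv.Perm.mul_apply, ha1, hb1]
    · rw [Equiv.Perm.mul_apply]
      have h1 := ha2 (b k) i (by rw [hb1 k]; exact hi)
      have h2 := hb2 k i hi
      rw [h1, h2, Pi.add_apply]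
      ring
  inv_mem' := by
    rintro a ⟨σa, h1, h2⟩
    refine ⟨σa, fun k => ?_, fun k i hi => ?_⟩
    · have := h1 (a⁻¹ k)
      simpa using this.symm
    · have hc : D.cube (a⁻¹ k) = D.cube k := by
        have := h1 (a⁻¹ k)
        simpa using this.symm
      have h3 := h2 (a⁻¹ k) i (by rw [hc]; exact hi)
      have h4 : D.vtx k i = σa i + D.vtx (a⁻¹ k) i := by
        simpa using h3
      have h5 : ∀ z : ZMod 2, z + z = 0 := by decide
      rw [h4, ← add_assoc, h5, zero_add]

end CubeDiagram

/-- If all fibers over vertices of a diagram `D` have cardinality at most 1, then the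
map sending an automorphism to its associated cube symmetry is a well-defined injective
group homomorphism `Aut(D) → ℤ₂ᵗ`; in particular `Aut(D)` is isomorphic to a subgroup
of `ℤ₂ᵗ`, hence is an elementary abelian 2-group. -/
theorem stmt12 {n t : ℕ} {ι : Type} (D : CubeDiagram n t ι)
    (hfib : ∀ (j : ι) (v : Fin t → ZMod 2), (D.fiber j v).Subsingleton) :
    ∃ f : D.aut →* Multiplicative (Fin t → ZMod 2),
      Function.Injective f ∧
      ∀ π : D.aut, D.IsAssoc (Multiplicative.toAdd (f π)) (π : Equiv.Perm (Fin n)) := by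
  classical
  have hself : ∀ a : ZMod 2, a + a = 0 := by decide
  set can : Equiv.Perm (Fin n) → (Fin t → ZMod 2) := fun π i =>
    if h : ∃ k, i ∈ D.I (D.cube k) then D.vtx (π h.choose) i + D.vtx h.choose i else 0
    with hcan
  have key : ∀ (π : Equiv.Perm (Fin n)) σ, D.IsAssoc σ π → ∀ i k, i ∈ D.I (D.cube k) →
      can π i = D.vtx (π k) i + D.vtx k i := by
    intro π σ hσ i k hk
    have hex : ∃ k, i ∈ D.I (D.cube k) := ⟨k, hk⟩
    simp only [hcan, dif_pos hex]
    rw [hσ.2 _ _ hex.choose_spec, hσ.2 _ _ hk]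
    rw [add_assoc, hself, add_assoc, hself]
  have hassoc : ∀ (π : Equiv.Perm (Fin n)), D.IsAut π → D.IsAssoc (can π) π := by
    rintro π ⟨σ, hσ⟩
    refine ⟨hσ.1, fun k i hi => ?_⟩
    rw [key π σ hσ i k hi, add_assoc, hself, add_zero]
  refine ⟨{ toFun := fun π => Multiplicative.ofAdd (can π.1)
            map_one' := ?_
            map_mul' := ?_ }, ?_, ?_⟩
  · apply congrArg Multiplicative.ofAdd
    funext i
    simp only [hcan]
    split
    · exact hself _
    · rfl
  · rintro ⟨a, σa, ha⟩ ⟨b, σb, hb⟩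
    apply congrArg Multiplicative.ofAdd
    funext i
    by_cases hex : ∃ k, i ∈ D.I (D.cube k)
    · obtain ⟨k, hk⟩ := hex
      have hab : D.IsAssoc (σa + σb) (a * b) := by
        refine ⟨fun m => by rw [Equiv.Perm.mul_apply, ha.1, hb.1], fun m j hj => ?_⟩
        rw [Equiv.Perm.mul_apply, ha.2 _ _ (by rw [hb.1]; exact hj), hb.2 _ _ hj,
          Pi.add_apply]
        ring
      have hbk : i ∈ D.I (D.cube (b k)) := by rw [hb.1]; exact hk
      have h1 := key (a * b) _ hab i k hk
      have h2 := key a _ ha i (b k) hbk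
      have h3 := key b _ hb i k hk
      show can (a * b) i = can a i + can b i
      rw [h1, h2, h3, Equiv.Perm.mul_apply]
      have : D.vtx (a (b k)) i + D.vtx (b k) i + (D.vtx (b k) i + D.vtx k i)
          = D.vtx (a (b k)) i + D.vtx k i + (D.vtx (b k) i + D.vtx (b k) i) := by ring
      rw [this, hself, add_zero]
    · show can (a * b) i = can a i + can b i
      simp only [hcan, dif_neg hex, add_zero]
  · rw [injective_iff_map_eq_one]
    rintro ⟨π, hπ⟩ hone
    have h0 : can π = 0 := by
      have := congrArg Multiplicative.toAdd hone
      simpa using this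
    have hπa := hassoc π hπ
    ext k : 2
    have hcube : D.cube (π k) = D.cube k := hπa.1 k
    have hvtx : D.vtx (π k) = D.vtx k := by
      funext i
      by_cases hi : i ∈ D.I (D.cube k)
      · rw [hπa.2 k i hi, h0, Pi.zero_apply, zero_add]
      · rw [D.vtx_supp k i hi, D.vtx_supp (π k) i (by rwa [hcube])]
    exact hfib (D.cube k) (D.vtx k) ⟨hcube, hvtx⟩ ⟨rfl, rfl⟩
  · rintro ⟨π, hπ⟩
    simpa using hassoc π hπ
end

section
/- Let G be a subgroup of S_n (acting on ℝ^n by coordinate permutations) that is the intersection of a point-stabilizer stab(x) with line-stabilizers stab(l₁),…,stab(l_t), where x ∈ ℝ^n and each l_i is a line orthogonal to the subspace ⟨x, l_1,…,l_{i-1}⟩-generated partition subspace, and suppose the span of x together with l₁,…,l_t is not contained in any proper diagonal subspace H ∈ Π_n (i.e., no two coordinates are identically equal on this span). Then every element of G is an involution or the identity, and G is abelian; moreover G ≅ ℤ₂^h with h ≤ ⌊n/2⌋. -/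
/-!
Let `g ∈ G` and let `V` be the span of `x` and the lines. `g` fixes `x`, and on each line `l = ℝv`
it acts by a scalar `c` with `c² = 1`, since permuting coordinates preserves `∑ vᵢ²`; hence `g²`
fixes `V` pointwise, which forces `g² = 1` because no two coordinates agree on `V`. A group of
exponent two is abelian and an `𝔽₂`-vector space. For the bound, the stabiliser of a point `i` in
an abelian permutation group fixes the orbit of `i` pointwise; that orbit has size `2ᵏ ≤ 2^(2ᵏ/2)`,
and induction on the remaining points gives `|G| ≤ 2^⌊n/2⌋`.
-/

/-- The stabilizer of a point `v ∈ ℝⁿ` under the coordinate permutation action of `Sₙ`. -/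
def pstab {n : ℕ} (v : Fin n → ℝ) : Subgroup (Equiv.Perm (Fin n)) where
  carrier := {σ | ∀ i, v (σ i) = v i}
  one_mem' := fun _ => rfl
  mul_mem' := by
    intro a b ha hb i
    simp only [Set.mem_setOf_eq] at ha hb
    rw [Equiv.Perm.mul_apply, ha, hb]
  inv_mem' := by
    intro a ha i
    simp only [Set.mem_setOf_eq] at ha ⊢
    have := ha (a⁻¹ i)
    simpa using this.symm

/-- The stabilizer of a subspace `l ⊆ ℝⁿ` under the coordinate permutation action of `Sₙ`:
permutations `σ` with `σ(l) = l` as a set. -/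
def lineStab {n : ℕ} (l : Submodule ℝ (Fin n → ℝ)) : Subgroup (Equiv.Perm (Fin n)) where
  carrier := {σ | (fun x : Fin n → ℝ => x ∘ σ) '' (l : Set (Fin n → ℝ)) = l}
  one_mem' := by
    simp only [Set.mem_setOf_eq]
    have h : (fun x : Fin n → ℝ => x ∘ ⇑(1 : Equiv.Perm (Fin n))) = id := by
      funext x; rfl
    rw [h, Set.image_id]
  mul_mem' := by
    intro a b ha hb
    simp only [Set.mem_setOf_eq] at ha hb ⊢
    have h : (fun x : Fin n → ℝ => x ∘ ⇑(a * b)) =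
        (fun x : Fin n → ℝ => x ∘ ⇑b) ∘ (fun x : Fin n → ℝ => x ∘ ⇑a) := by
      funext x; funext i
      simp [Equiv.Perm.mul_apply, Function.comp]
    rw [h, Set.image_comp, ha, hb]
  inv_mem' := by
    intro a ha
    simp only [Set.mem_setOf_eq] at ha ⊢
    have key : ((fun x : Fin n → ℝ => x ∘ ⇑a⁻¹) ∘ (fun x : Fin n → ℝ => x ∘ ⇑a)) = id := by
      funext x; funext i
      simp [Function.comp]
    calc (fun x : Fin n → ℝ => x ∘ ⇑a⁻¹) '' (l : Set (Fin n → ℝ))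
        = (fun x : Fin n → ℝ => x ∘ ⇑a⁻¹) ''
            ((fun x : Fin n → ℝ => x ∘ ⇑a) '' (l : Set (Fin n → ℝ))) := by rw [ha]
      _ = (l : Set (Fin n → ℝ)) := by rw [← Set.image_comp, key, Set.image_id]

open Equiv MulAction

theorem mul_comm_of_forall_mul_self_eq_one {G : Type*} [Group G] (hG : ∀ g : G, g * g = 1)
    (a b : G) : a * b = b * a :=
  Commute.of_orderOf_dvd_two (fun g => orderOf_dvd_of_pow_eq_one (by rw [sq, hG])) a b

theorem exists_mulEquiv_multiplicative_zmod_two {G : Type*} [Group G] [Finite G]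
    (hG : ∀ g : G, g * g = 1) : ∃ h : ℕ, Nonempty (G ≃* Multiplicative (Fin h → ZMod 2)) := by
  let _ : CommGroup G := { mul_comm := mul_comm_of_forall_mul_self_eq_one hG }
  let _ : Module (ZMod 2) (Additive G) :=
    AddCommGroup.zmodModule fun a => by rw [two_nsmul]; exact hG a.toMul
  exact ⟨_, ⟨AddEquiv.toMultiplicativeRight
    (Module.finBasis (ZMod 2) (Additive G)).equivFun.toAddEquiv⟩⟩

theorem two_pow_le_two_pow_two_pow_div_two (k : ℕ) : 2 ^ k ≤ 2 ^ (2 ^ k / 2) := by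
  cases k with
  | zero => simp
  | succ k =>
    rw [pow_succ, Nat.mul_div_cancel _ two_pos]
    exact Nat.pow_le_pow_right two_pos Nat.lt_two_pow_self

theorem ncard_orbit_le_two_pow_div_two {G α : Type*} [Group G] [MulAction G α] [Finite α]
    (hG : ∀ g : G, g * g = 1) (i : α) :
    (orbit G i).ncard ≤ 2 ^ ((orbit G i).ncard / 2) := by
  have : Fact (Nat.Prime 2) := Nat.fact_prime_two
  have h2 : IsPGroup 2 G := IsPGroup.of_exponent_dvd_pow (n := 1)
    (Monoid.exponent_dvd_of_forall_pow_eq_one fun g => by rw [pow_one, sq, hG])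
  obtain ⟨k, hk⟩ := h2.card_orbit i
  rw [← Nat.card_coe_set_eq, hk]
  exact two_pow_le_two_pow_two_pow_div_two k

theorem card_le_two_pow_ncard_div_two_of_mul_self_eq_one {G α : Type*} [Group G] [Finite G]
    [MulAction G α] [FaithfulSMul G α] [Finite α] (hG : ∀ g : G, g * g = 1) (s : Set α)
    (hs : ∀ g : G, ∀ i ∉ s, g • i = i) : Nat.card G ≤ 2 ^ (s.ncard / 2) := by
  induction hm : s.ncard using Nat.strong_induction_on generalizing G s with
  | _ m ih =>
  obtain rfl | ⟨i, hi⟩ := s.eq_empty_or_nonempty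
  · have : Subsingleton G := ⟨fun a b => eq_of_smul_eq_smul fun j => by
      rw [hs a j (Set.notMem_empty j), hs b j (Set.notMem_empty j)]⟩
    exact (Finite.card_le_one_iff_subsingleton.mpr this).trans Nat.one_le_two_pow
  have hstab_fix : ∀ h ∈ stabilizer G i, ∀ j ∈ orbit G i, h • j = j := by
    rintro h hh _ ⟨g, rfl⟩
    rw [smul_smul, mul_comm_of_forall_mul_self_eq_one hG, ← smul_smul, mem_stabilizer_iff.mp hh]
  have horbit_sub : orbit G i ⊆ s := by
    rintro _ ⟨g, rfl⟩
    by_contra hgi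
    have := hs g⁻¹ _ hgi
    rw [inv_smul_smul] at this
    exact hgi (this ▸ hi)
  have hcard : Nat.card (stabilizer G i) * (orbit G i).ncard = Nat.card G := by
    rw [← index_stabilizer]
    exact (stabilizer G i).card_mul_index
  have hsO : (s \ orbit G i).ncard = m - (orbit G i).ncard := by
    rw [Set.ncard_sdiff horbit_sub, hm]
  have hOpos : 0 < (orbit G i).ncard := (Set.ncard_pos).mpr (nonempty_orbit i)
  have hOm : (orbit G i).ncard ≤ m := hm ▸ Set.ncard_le_ncard horbit_sub
  have hH : Nat.card (stabilizer G i) ≤ 2 ^ ((s \ orbit G i).ncard / 2) :=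
    ih _ (by omega) (fun h => Subtype.ext (hG h)) (s \ orbit G i)
      (fun h j hj => by
        rw [Subgroup.smul_def]
        by_cases hjO : j ∈ orbit G i
        · exact hstab_fix h h.2 j hjO
        · exact hs h j fun hjs => hj ⟨hjs, hjO⟩) rfl
  calc Nat.card G = Nat.card (stabilizer G i) * (orbit G i).ncard := hcard.symm
    _ ≤ 2 ^ ((s \ orbit G i).ncard / 2) * 2 ^ ((orbit G i).ncard / 2) :=
      Nat.mul_le_mul hH (ncard_orbit_le_two_pow_div_two hG i)
    _ ≤ 2 ^ (m / 2) := by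
      rw [← pow_add]
      exact Nat.pow_le_pow_right two_pos (by omega)

theorem sq_eq_one_of_apply_perm_eq_mul {ι : Type*} [Fintype ι] {v : ι → ℝ} (hv : v ≠ 0)
    {σ : Perm ι} {c : ℝ} (h : ∀ i, v (σ i) = c * v i) : c ^ 2 = 1 := by
  have hS : ∑ i, v i ^ 2 ≠ 0 := by
    obtain ⟨i, hi⟩ := Function.ne_iff.mp hv
    exact (Finset.sum_pos' (fun j _ => sq_nonneg (v j))
      ⟨i, Finset.mem_univ i, sq_pos_of_ne_zero hi⟩).ne'
  refine (mul_eq_right₀ hS).mp ?_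
  calc c ^ 2 * ∑ i, v i ^ 2 = ∑ i, v (σ i) ^ 2 := by simp only [h, mul_pow, Finset.mul_sum]
    _ = ∑ i, v i ^ 2 := Equiv.sum_comp σ (fun i => v i ^ 2)

theorem le_eqLocus_funLeft_mul_self_of_mem_lineStab {n : ℕ} {l : Submodule ℝ (Fin n → ℝ)}
    (hl : Module.finrank ℝ l = 1) {g : Perm (Fin n)} (hg : g ∈ lineStab l) :
    l ≤ LinearMap.eqLocus (LinearMap.funLeft ℝ ℝ ⇑(g * g)) LinearMap.id := by
  obtain ⟨v, hv0, hv⟩ := finrank_eq_one_iff'.mp hl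
  have hgl : (fun y : Fin n → ℝ => y ∘ g) '' l = l := hg
  obtain ⟨c, hc⟩ := hv ⟨(v : Fin n → ℝ) ∘ g, hgl.subset (Set.mem_image_of_mem _ v.2)⟩
  have hvg : ∀ j, (v : Fin n → ℝ) (g j) = c * (v : Fin n → ℝ) j := fun j =>
    congrFun (congrArg Subtype.val hc).symm j
  have hc2 : c ^ 2 = 1 :=
    sq_eq_one_of_apply_perm_eq_mul (Submodule.coe_eq_zero.not.mpr hv0) hvg
  intro y hy
  obtain ⟨r, hr⟩ := hv ⟨y, hy⟩
  obtain rfl : y = r • (v : Fin n → ℝ) := congrArg Subtype.val hr.symm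
  rw [LinearMap.mem_eqLocus]
  funext i
  simp only [LinearMap.funLeft_apply, Perm.mul_apply, LinearMap.id_apply, Pi.smul_apply,
    smul_eq_mul, hvg]
  linear_combination (r * (v : Fin n → ℝ) i) * hc2

theorem eq_one_of_le_eqLocus_funLeft {ι : Type*} {V : Submodule ℝ (ι → ℝ)}
    (hV : ∀ i j : ι, i ≠ j → ¬ ∀ y ∈ V, y i = y j) {τ : Perm ι}
    (hτ : V ≤ LinearMap.eqLocus (LinearMap.funLeft ℝ ℝ ⇑τ) LinearMap.id) : τ = 1 :=
  Perm.ext fun i => by_contra fun hi =>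
    hV _ _ hi fun _ hy => congrFun (LinearMap.mem_eqLocus.mp (hτ hy)) i

theorem mul_self_eq_one_of_mem_pstab_inf_lineStab {n t : ℕ} {x : Fin n → ℝ}
    {l : Fin t → Submodule ℝ (Fin n → ℝ)} (hl : ∀ a, Module.finrank ℝ (l a) = 1)
    (hnd : ∀ i j : Fin n, i ≠ j → ¬ ∀ y ∈ Submodule.span ℝ {x} ⊔ ⨆ a, l a, y i = y j)
    {g : Perm (Fin n)} (hg : g ∈ pstab x ⊓ ⨅ a, lineStab (l a)) : g * g = 1 := by
  rw [Subgroup.mem_inf, Subgroup.mem_iInf] at hg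
  refine eq_one_of_le_eqLocus_funLeft hnd (sup_le ?_
    (iSup_le fun a => le_eqLocus_funLeft_mul_self_of_mem_lineStab (hl a) (hg.2 a)))
  rw [Submodule.span_singleton_le_iff_mem, LinearMap.mem_eqLocus]
  funext i
  simp only [LinearMap.funLeft_apply, Perm.mul_apply, LinearMap.id_apply]
  rw [hg.1, hg.1]

/-- If `G ⊆ Sₙ` is the intersection of the stabilizer of a point `x` with the
stabilizers of lines `l₁,…,l_t`, and the span of `x` together with the lines is not
contained in any proper diagonal subspace (no two coordinates identically equal on it),
then every element of `G` is an involution or the identity, `G` is abelian, and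
`G ≅ ℤ₂ʰ` for some `h ≤ ⌊n/2⌋`. -/
theorem stmt15 {n t : ℕ} (x : Fin n → ℝ) (l : Fin t → Submodule ℝ (Fin n → ℝ))
    (hl : ∀ a, Module.finrank ℝ (l a) = 1)
    (hnd : ∀ i j : Fin n, i ≠ j →
      ¬ (∀ y ∈ Submodule.span ℝ {x} ⊔ ⨆ a : Fin t, l a, y i = y j)) :
    (∀ g ∈ pstab x ⊓ ⨅ a : Fin t, lineStab (l a), g * g = 1) ∧
    (∀ g₁ ∈ pstab x ⊓ ⨅ a : Fin t, lineStab (l a),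
      ∀ g₂ ∈ pstab x ⊓ ⨅ a : Fin t, lineStab (l a), g₁ * g₂ = g₂ * g₁) ∧
    ∃ h : ℕ, h ≤ n / 2 ∧
      Nonempty ((↥(pstab x ⊓ ⨅ a : Fin t, lineStab (l a))) ≃*
        Multiplicative (Fin h → ZMod 2)) := by
  set G := pstab x ⊓ ⨅ a : Fin t, lineStab (l a)
  have hsq : ∀ g ∈ G, g * g = 1 := fun g hg =>
    mul_self_eq_one_of_mem_pstab_inf_lineStab hl hnd hg
  have hsq' : ∀ g : G, g * g = 1 := fun g => Subtype.ext (hsq g g.2)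
  refine ⟨hsq, fun g₁ h₁ g₂ h₂ =>
    congrArg Subtype.val (mul_comm_of_forall_mul_self_eq_one hsq' ⟨g₁, h₁⟩ ⟨g₂, h₂⟩), ?_⟩
  obtain ⟨h, ⟨e⟩⟩ := exists_mulEquiv_multiplicative_zmod_two hsq'
  refine ⟨h, ?_, ⟨e⟩⟩
  have hcard := card_le_two_pow_ncard_div_two_of_mul_self_eq_one (α := Fin n) hsq' Set.univ
    (fun _ i hi => absurd (Set.mem_univ i) hi)
  rw [Nat.card_congr e.toEquiv] at hcard
  simp only [Nat.card_eq_fintype_card, Fintype.card_multiplicative, Fintype.card_fun,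
    ZMod.card, Fintype.card_fin, Set.ncard_univ] at hcard
  exact (Nat.pow_le_pow_iff_right (by norm_num)).mp hcard
end
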